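/- arXiv:2212.10519 — 5 statements merged into one kernel-verified Lean document; each statement's English description precedes it below -/
import Mathlib

section
/- Let N be a positive integer, let A be an invertible N×N complex matrix, let b, x ∈ ℂ^N with A x = b, and let x̂ ∈ ℂ^N satisfy (A + δA) x̂ = b for some N×N complex matrix δA. If there exists a real number α > 1 such that α · ‖A⁻¹‖₂ · ‖δA‖₂ ≤ 1, then the matrix A + δA is invertible, and (α/(α+1)) · ‖x‖₂ ≤ ‖x̂‖₂ ≤ (α/(α−1)) · ‖x‖₂. -/
/-!
Identify matrices isometrically with operators on `ℓ²`. Since `‖A⁻¹‖ ‖δA‖ ≤ 1/α < 1`, the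
factorisation `A + δA = A (1 + A⁻¹ δA)` and the Neumann series make `A + δA` invertible.
Subtracting the two equations gives `x - x̂ = A⁻¹ δA x̂`, hence `α ‖x - x̂‖ ≤ ‖x̂‖`, and both bounds
follow from the triangle inequality.
-/

theorem isUnit_add_of_mul_eq_one_of_norm_mul_lt_one {R : Type*} [NormedRing R]
    [HasSummableGeomSeries R] {a a' : R} (hleft : a' * a = 1) (hright : a * a' = 1) (d : R)
    (h : ‖a'‖ * ‖d‖ < 1) : IsUnit (a + d) := by
  have hsmall : IsUnit (1 - -(a' * d)) := by
    refine isUnit_one_sub_of_norm_lt_one ?_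
    rw [norm_neg]
    exact (norm_mul_le _ _).trans_lt h
  rw [sub_neg_eq_add] at hsmall
  have hfactor : a + d = a * (1 + a' * d) := by
    rw [mul_add, mul_one, ← mul_assoc, hright, one_mul]
  rw [hfactor]
  exact IsUnit.mul ⟨⟨a, a', hright, hleft⟩, rfl⟩ hsmall

theorem norm_sub_le_of_apply_eq_add_apply {𝕜 E : Type*} [NontriviallyNormedField 𝕜]
    [SeminormedAddCommGroup E] [NormedSpace 𝕜 E] {A A' D : E →L[𝕜] E} (hA : A' * A = 1)
    {x y : E} (h : A x = (A + D) y) :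
    ‖x - y‖ ≤ ‖A'‖ * ‖D‖ * ‖y‖ := by
  have hsub : x - y = A' (D y) := by
    have hleft : ∀ v, A' (A v) = v := fun v => by
      simpa using congr($hA v)
    rw [← hleft (x - y), map_sub, h, add_apply, add_sub_cancel_left]
  rw [hsub, mul_assoc]
  exact A'.le_opNorm_of_le (D.le_opNorm y)

section NormComparison

variable {E : Type*} [SeminormedAddCommGroup E] {x y : E} {α : ℝ}

theorem div_add_one_mul_norm_le_of_mul_norm_sub_le (hα : 0 < α) (h : α * ‖x - y‖ ≤ ‖y‖) :
    α / (α + 1) * ‖x‖ ≤ ‖y‖ := by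
  have htri : ‖x‖ ≤ ‖y‖ + ‖x - y‖ := norm_le_insert' x y
  rw [div_mul_eq_mul_div, div_le_iff₀ (by linarith)]
  nlinarith

theorem norm_le_div_sub_one_mul_of_mul_norm_sub_le (hα : 1 < α) (h : α * ‖x - y‖ ≤ ‖y‖) :
    ‖y‖ ≤ α / (α - 1) * ‖x‖ := by
  have htri : ‖y‖ ≤ ‖x‖ + ‖x - y‖ := norm_le_insert x y
  rw [div_mul_eq_mul_div, le_div_iff₀ (by linarith)]
  nlinarith

end NormComparison

theorem stmt_0_general (N : ℕ)
    (A δA : Matrix (Fin N) (Fin N) ℂ) (hA : IsUnit A)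
    (b x xhat : EuclideanSpace ℂ (Fin N))
    (hx : A.mulVec x = b) (hxhat : (A + δA).mulVec xhat = b)
    (α : ℝ) (hα : 1 < α)
    (hbound : α * ‖Matrix.toEuclideanCLM (𝕜 := ℂ) A⁻¹‖ * ‖Matrix.toEuclideanCLM (𝕜 := ℂ) δA‖ ≤ 1) :
    IsUnit (A + δA) ∧
      (α / (α + 1)) * ‖x‖ ≤ ‖xhat‖ ∧ ‖xhat‖ ≤ (α / (α - 1)) * ‖x‖ := by
  set f := Matrix.toEuclideanCLM (n := Fin N) (𝕜 := ℂ)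
  have hα₀ : 0 < α := one_pos.trans hα
  have hsmall : ‖f A⁻¹‖ * ‖f δA‖ < 1 := by
    have := mul_nonneg (norm_nonneg (f A⁻¹)) (norm_nonneg (f δA))
    nlinarith
  have hdet : IsUnit A.det := (Matrix.isUnit_iff_isUnit_det A).mp hA
  have hleft : f A⁻¹ * f A = 1 := by rw [← map_mul, Matrix.nonsing_inv_mul A hdet, map_one]
  have hright : f A * f A⁻¹ = 1 := by rw [← map_mul, Matrix.mul_nonsing_inv A hdet, map_one]
  have hunit : IsUnit (f A + f δA) :=
    isUnit_add_of_mul_eq_one_of_norm_mul_lt_one hleft hright _ hsmall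
  have heq : f A x = (f A + f δA) xhat := by
    apply WithLp.ofLp_injective 2
    rw [← map_add, Matrix.ofLp_toEuclideanCLM, Matrix.ofLp_toEuclideanCLM, hx, hxhat]
  have hclose : α * ‖x - xhat‖ ≤ ‖xhat‖ :=
    calc α * ‖x - xhat‖ ≤ α * (‖f A⁻¹‖ * ‖f δA‖ * ‖xhat‖) := by
          gcongr
          exact norm_sub_le_of_apply_eq_add_apply hleft heq
      _ = α * ‖f A⁻¹‖ * ‖f δA‖ * ‖xhat‖ := by ring
      _ ≤ ‖xhat‖ := mul_le_of_le_one_left (norm_nonneg _) hbound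
  refine ⟨?_, div_add_one_mul_norm_le_of_mul_norm_sub_le hα₀ hclose,
    norm_le_div_sub_one_mul_of_mul_norm_sub_le hα hclose⟩
  rwa [← map_add, MulEquiv.isUnit_map] at hunit

/-- If `A x = b`, `(A + δA) x̂ = b`, and `α * ‖A⁻¹‖₂ * ‖δA‖₂ ≤ 1` for some
`α > 1`, then `A + δA` is invertible and `(α/(α+1)) ‖x‖₂ ≤ ‖x̂‖₂ ≤ (α/(α−1)) ‖x‖₂`. -/
theorem stmt_0 (N : ℕ) (hN : 0 < N)
    (A δA : Matrix (Fin N) (Fin N) ℂ) (hA : IsUnit A)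
    (b x xhat : EuclideanSpace ℂ (Fin N))
    (hx : A.mulVec x = b) (hxhat : (A + δA).mulVec xhat = b)
    (α : ℝ) (hα : 1 < α)
    (hbound : α * ‖Matrix.toEuclideanCLM (𝕜 := ℂ) A⁻¹‖ * ‖Matrix.toEuclideanCLM (𝕜 := ℂ) δA‖ ≤ 1) :
    IsUnit (A + δA) ∧
      (α / (α + 1)) * ‖x‖ ≤ ‖xhat‖ ∧ ‖xhat‖ ≤ (α / (α - 1)) * ‖x‖ :=
  stmt_0_general N A δA hA b x xhat hx hxhat α hα hbound
end

section
/- Let Γ ⊆ ℂ be a nonempty set, let F : ℂ → ℂ, let z₀, …, z_N ∈ Γ, and let Λ ≥ 0 be a constant such that for every complex polynomial Q of degree at most N, sup_{z∈Γ} |Q(z)| ≤ Λ · max_{0≤j≤N} |Q(z_j)| (the Lebesgue constant property for the nodes {z_j} on Γ). Let V be the (N+1)×(N+1) Vandermonde matrix with entries V_{jk} = z_j^k, let f = (F(z₀), …, F(z_N))ᵀ, and let a = (a₀, …, a_N)ᵀ solve V a = f, so that P_N(z) = Σ_{k=0}^N a_k z^k interpolates F at the nodes. Suppose â = (â₀,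 …, â_N)ᵀ satisfies (V + δV) â = f for some matrix δV with ‖δV‖₂ ≤ u·γ, where u, γ ≥ 0 are constants, and let P̂_N(z) = Σ_{k=0}^N â_k z^k. If sup_{z∈Γ} |F(z) − P_N(z)| ≤ ε for a constant ε ≥ 0, then for every z ∈ Γ, |F(z) − P̂_N(z)| ≤ ε + u·γ·Λ·‖â‖₂. -/
/-!
The difference `Q = P_N - P̂_N` is a polynomial of degree at most `N` whose values at the nodes are
the residual of `â` in the unperturbed system: `V (a - â) = f - V â = δV â`. Each such value is at
most `‖δV‖₂ ‖â‖₂ ≤ u γ ‖â‖₂`, so the Lebesgue constant bounds `Q` by `u γ Λ ‖â‖₂` on all of `Γ`,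
and the triangle inequality `|F - P̂_N| ≤ |F - P_N| + |Q|` finishes the proof.
-/

open Polynomial

namespace Polynomial

variable {R : Type*} [CommSemiring R] [DecidableEq R]

theorem eval_ofFn {n : ℕ} (c : Fin n → R) (x : R) :
    (ofFn n c).eval x = ∑ k, c k * x ^ (k : ℕ) := by
  simp only [ofFn_eq_sum_monomial, eval_finsetSum, eval_monomial]

theorem natDegree_ofFn_succ_le {n : ℕ} (c : Fin (n + 1) → R) : (ofFn (n + 1) c).natDegree ≤ n :=
  Nat.lt_succ_iff.mp (ofFn_natDegree_lt n.succ_pos c)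

end Polynomial

namespace Matrix

theorem vandermonde_mulVec_apply {R : Type*} [CommRing R] [DecidableEq R] {n : ℕ}
    (v c : Fin n → R) (j : Fin n) : (vandermonde v *ᵥ c) j = (ofFn n c).eval (v j) := by
  simp only [mulVec, dotProduct, vandermonde_apply, eval_ofFn, mul_comm]

theorem mulVec_sub_eq_of_add_mulVec_eq {m n R : Type*} [Fintype n] [Ring R]
    {V δV : Matrix m n R} {a b : n → R} {f : m → R} (ha : V *ᵥ a = f)
    (hb : (V + δV) *ᵥ b = f) : V *ᵥ (a - b) = δV *ᵥ b := by
  rw [mulVec_sub, ha, ← hb, add_mulVec, add_sub_cancel_left]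

theorem norm_mulVec_apply_le {𝕜 n : Type*} [RCLike 𝕜] [Fintype n] [DecidableEq n]
    (A : Matrix n n 𝕜) (x : EuclideanSpace 𝕜 n) (j : n) :
    ‖(A *ᵥ x) j‖ ≤ ‖toEuclideanCLM (𝕜 := 𝕜) A‖ * ‖x‖ :=
  calc ‖(A *ᵥ x) j‖ = ‖toEuclideanCLM (𝕜 := 𝕜) A x j‖ := rfl
    _ ≤ ‖toEuclideanCLM (𝕜 := 𝕜) A x‖ := PiLp.norm_apply_le _ j
    _ ≤ ‖toEuclideanCLM (𝕜 := 𝕜) A‖ * ‖x‖ := ContinuousLinearMap.le_opNorm _ _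

end Matrix

open Finset in
theorem stmt_1_general (N : ℕ) (Γ : Set ℂ) (F : ℂ → ℂ)
    (z : Fin (N + 1) → ℂ)
    (Λ : ℝ) (hΛ : 0 ≤ Λ)
    (hLeb : ∀ Q : Polynomial ℂ, Q.natDegree ≤ N → ∀ w ∈ Γ,
      ‖Q.eval w‖ ≤ Λ * (univ.sup' univ_nonempty fun j => ‖Q.eval (z j)‖))
    (V δV : Matrix (Fin (N + 1)) (Fin (N + 1)) ℂ)
    (hV : V = Matrix.of fun j k : Fin (N + 1) => z j ^ (k : ℕ))
    (f a ahat : EuclideanSpace ℂ (Fin (N + 1)))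
    (ha : V.mulVec a = f)
    (u γ : ℝ)
    (hahat : (V + δV).mulVec ahat = f)
    (hδV : ‖Matrix.toEuclideanCLM (𝕜 := ℂ) δV‖ ≤ u * γ)
    (ε : ℝ)
    (herr : ∀ w ∈ Γ, ‖F w - ∑ k, a k * w ^ (k : ℕ)‖ ≤ ε) :
    ∀ w ∈ Γ, ‖F w - ∑ k, ahat k * w ^ (k : ℕ)‖ ≤ ε + u * γ * Λ * ‖ahat‖ := by
  intro w hw
  set Q := ofFn (N + 1) (⇑a - ⇑ahat)
  have hnodes : ∀ j, ‖Q.eval (z j)‖ ≤ u * γ * ‖ahat‖ := fun j => by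
    rw [← Matrix.vandermonde_mulVec_apply, ← show V = Matrix.vandermonde z from hV,
      Matrix.mulVec_sub_eq_of_add_mulVec_eq ha hahat]
    exact (Matrix.norm_mulVec_apply_le δV ahat j).trans (by gcongr)
  have hQ : ‖Q.eval w‖ ≤ Λ * (u * γ * ‖ahat‖) :=
    (hLeb Q (natDegree_ofFn_succ_le _) w hw).trans <| by
      gcongr; exact sup'_le _ _ fun j _ => hnodes j
  have hsplit : F w - ∑ k, ahat k * w ^ (k : ℕ) = (F w - ∑ k, a k * w ^ (k : ℕ)) + Q.eval w := by
    simp only [Q, eval_ofFn, Pi.sub_apply, sub_mul, sum_sub_distrib]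
    ring
  calc ‖F w - ∑ k, ahat k * w ^ (k : ℕ)‖
      ≤ ‖F w - ∑ k, a k * w ^ (k : ℕ)‖ + ‖Q.eval w‖ := hsplit ▸ norm_add_le _ _
    _ ≤ ε + u * γ * Λ * ‖ahat‖ := by linarith [herr w hw]

open Finset in
/-- If `P_N` interpolates `F` at nodes `z j ∈ Γ` with Lebesgue constant `Λ`,
`â` solves the perturbed Vandermonde system `(V + δV) â = f` with `‖δV‖₂ ≤ u γ`, and
`sup_Γ |F - P_N| ≤ ε`, then `|F(z) - P̂_N(z)| ≤ ε + u γ Λ ‖â‖₂` on `Γ`. -/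
theorem stmt_1 (N : ℕ) (Γ : Set ℂ) (hΓ : Γ.Nonempty) (F : ℂ → ℂ)
    (z : Fin (N + 1) → ℂ) (hz : ∀ j, z j ∈ Γ)
    (Λ : ℝ) (hΛ : 0 ≤ Λ)
    (hLeb : ∀ Q : Polynomial ℂ, Q.natDegree ≤ N → ∀ w ∈ Γ,
      ‖Q.eval w‖ ≤ Λ * (univ.sup' univ_nonempty fun j => ‖Q.eval (z j)‖))
    (V δV : Matrix (Fin (N + 1)) (Fin (N + 1)) ℂ)
    (hV : V = Matrix.of fun j k : Fin (N + 1) => z j ^ (k : ℕ))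
    (f a ahat : EuclideanSpace ℂ (Fin (N + 1)))
    (hf : ∀ j, f j = F (z j))
    (ha : V.mulVec a = f)
    (u γ : ℝ) (hu : 0 ≤ u) (hγ : 0 ≤ γ)
    (hahat : (V + δV).mulVec ahat = f)
    (hδV : ‖Matrix.toEuclideanCLM (𝕜 := ℂ) δV‖ ≤ u * γ)
    (ε : ℝ) (hε : 0 ≤ ε)
    (herr : ∀ w ∈ Γ, ‖F w - ∑ k, a k * w ^ (k : ℕ)‖ ≤ ε) :
    ∀ w ∈ Γ, ‖F w - ∑ k, ahat k * w ^ (k : ℕ)‖ ≤ ε + u * γ * Λ * ‖ahat‖ :=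
  stmt_1_general N Γ F z Λ hΛ hLeb V δV hV f a ahat ha u γ hahat hδV ε herr
end

section
/- Let P_N(z) = Σ_{k=0}^N a_k z^k be a complex polynomial of degree at most N. Then the Euclidean norm of its coefficient vector satisfies ‖a‖₂ ≤ (1 + √2)^N · sup_{x ∈ [−1,1]} |P_N(x)|, where the supremum is over the real interval [−1,1]. -/
/-!
Let `P(z) = ∑ aₖ zᵏ` and `M = sup_{[-1,1]} |P|`. The polynomial `Q(w) = wᴺ P((w + w⁻¹)/2)` is
entire and `|Q(w)| = |P(Re w)| ≤ M` on the unit circle, so `|Q| ≤ M` on the closed unit disk by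
the maximum modulus principle. Every `z` with `|z| ≤ 1` is `(v + v⁻¹)/2` for some `v` with
`(1 + √2)⁻¹ ≤ |v| ≤ 1`, hence `|P(z)| = |Q(v)| / |v|ᴺ ≤ (1 + √2)ᴺ M`. Finally the monomials `zᵏ`
are orthonormal in `L²` of the unit circle, so `‖a‖₂` is the `L²` norm of `P` there, which is at
most its sup norm.
-/

open Complex MeasureTheory AddCircle

theorem Orthonormal.norm_sum_smul {𝕜 E ι : Type*} [RCLike 𝕜] [NormedAddCommGroup E]
    [InnerProductSpace 𝕜 E] [Fintype ι] {v : ι → E} (hv : Orthonormal 𝕜 v)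
    (a : EuclideanSpace 𝕜 ι) : ‖∑ i, a i • v i‖ = ‖a‖ := by
  have h : ((‖∑ i, a i • v i‖ : ℝ) : 𝕜) ^ 2 = ((‖a‖ : ℝ) : 𝕜) ^ 2 := by
    rw [← inner_self_eq_norm_sq_to_K, ← inner_self_eq_norm_sq_to_K, hv.inner_sum,
      PiLp.inner_apply]
    simp [RCLike.conj_mul]
  exact (pow_left_inj₀ (norm_nonneg _) (norm_nonneg _) two_ne_zero).1 (by exact_mod_cast h)

theorem norm_le_of_forall_norm_sum_mul_pow_le {n : ℕ} (a : EuclideanSpace ℂ (Fin n)) {C : ℝ}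
    (hC : ∀ z : ℂ, ‖z‖ = 1 → ‖∑ k, a k * z ^ (k : ℕ)‖ ≤ C) : ‖a‖ ≤ C := by
  have : Fact ((0 : ℝ) < 1) := ⟨one_pos⟩
  set f : C(AddCircle (1 : ℝ), ℂ) := ∑ k, a k • fourier (k : ℕ)
  have hf : ∀ x, ‖f x‖ ≤ C := fun x => by
    simpa [f, fourier_apply, toCircle_nsmul] using hC _ (Circle.norm_coe (toCircle x))
  calc ‖a‖ = ‖ContinuousMap.toLp 2 haarAddCircle ℂ f‖ := by
        simp only [f, map_sum, map_smul]
        exact ((orthonormal_fourier.comp _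
          (Nat.cast_injective.comp Fin.val_injective)).norm_sum_smul a).symm
    _ ≤ ‖f‖ := by
        refine (ContinuousLinearMap.le_opNorm _ f).trans
          (mul_le_of_le_one_left (norm_nonneg f) ?_)
        simpa [measureUnivNNReal] using
          ContinuousMap.toLp_norm_le (E := ℂ) (p := 2) (𝕜 := ℂ) (haarAddCircle (T := 1))
    _ ≤ C := (ContinuousMap.norm_le f ((norm_nonneg _).trans (hf 0))).2 hf

lemma exists_joukowski_preimage {z : ℂ} (hz : ‖z‖ ≤ 1) :
    ∃ v : ℂ, (1 + √2)⁻¹ ≤ ‖v‖ ∧ ‖v‖ ≤ 1 ∧ (v + v⁻¹) / 2 = z := by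
  obtain ⟨s, hs⟩ := IsAlgClosed.exists_pow_nat_eq (z ^ 2 - 1) two_pos
  -- the two preimages `z ± s` of `z` have product `1`; take the one of smaller modulus
  wlog hle : ‖z + s‖ ≤ ‖z - s‖ generalizing s
  · exact this (-s) (by rw [neg_sq, hs]) (by rw [← sub_eq_add_neg, sub_neg_eq_add]; linarith)
  have hmul : (z + s) * (z - s) = 1 := by linear_combination -hs
  have hinv : (z + s)⁻¹ = z - s := inv_eq_of_mul_eq_one_right hmul
  have hnorm_mul : ‖z + s‖ * ‖z - s‖ = 1 := by rw [← norm_mul, hmul, norm_one]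
  have hs_le : ‖s‖ ≤ √2 := by
    refine Real.le_sqrt_of_sq_le ?_
    calc ‖s‖ ^ 2 = ‖z ^ 2 - 1‖ := by rw [← hs, norm_pow]
      _ ≤ ‖z‖ ^ 2 + 1 := (norm_sub_le _ _).trans_eq (by rw [norm_pow, norm_one])
      _ ≤ 2 := by nlinarith [norm_nonneg z]
  have hsub_le : ‖z - s‖ ≤ 1 + √2 := (norm_sub_le z s).trans (add_le_add hz hs_le)
  refine ⟨z + s, ?_, ?_, ?_⟩
  · rw [inv_le_comm₀ (by positivity) (by nlinarith [norm_nonneg (z + s)]), ← norm_inv, hinv]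
    exact hsub_le
  · nlinarith [norm_nonneg (z + s)]
  · rw [hinv]; ring

noncomputable def joukowskiPullback {N : ℕ} (a : Fin (N + 1) → ℂ) (w : ℂ) : ℂ :=
  ∑ k, a k * ((w ^ 2 + 1) / 2) ^ (k : ℕ) * w ^ (N - k)

lemma joukowskiPullback_eq {N : ℕ} (a : Fin (N + 1) → ℂ) {w : ℂ} (hw : w ≠ 0) :
    joukowskiPullback a w = w ^ N * ∑ k, a k * ((w + w⁻¹) / 2) ^ (k : ℕ) := by
  rw [joukowskiPullback, Finset.mul_sum]
  refine Finset.sum_congr rfl fun k _ => ?_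
  have hsplit : w ^ N = w ^ (k : ℕ) * w ^ (N - k) := by
    rw [← pow_add, Nat.add_sub_cancel' (Nat.lt_succ_iff.mp k.isLt)]
  have hjouk : (w ^ 2 + 1) / 2 = w * ((w + w⁻¹) / 2) := by field_simp
  rw [hsplit, hjouk, mul_pow]
  ring

lemma differentiable_joukowskiPullback {N : ℕ} (a : Fin (N + 1) → ℂ) :
    Differentiable ℂ (joukowskiPullback a) := by
  unfold joukowskiPullback
  fun_prop

lemma norm_joukowskiPullback_le {N : ℕ} (a : Fin (N + 1) → ℂ) {M : ℝ}
    (hM : ∀ x ∈ Set.Icc (-1 : ℝ) 1, ‖∑ k, a k * (x : ℂ) ^ (k : ℕ)‖ ≤ M)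
    {w : ℂ} (hw : ‖w‖ ≤ 1) : ‖joukowskiPullback a w‖ ≤ M := by
  refine norm_le_of_forall_mem_frontier_norm_le Metric.isBounded_ball
    (differentiable_joukowskiPullback a).diffContOnCl ?_
    (by rwa [closure_ball (0 : ℂ) one_ne_zero, Metric.mem_closedBall, dist_zero_right])
  intro v hv
  rw [frontier_ball (0 : ℂ) one_ne_zero, mem_sphere_zero_iff_norm] at hv
  have hv0 : v ≠ 0 := norm_ne_zero_iff.mp (by rw [hv]; exact one_ne_zero)
  have hre : (v + v⁻¹) / 2 = (v.re : ℂ) := by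
    rw [inv_eq_conj hv, add_conj]; push_cast; ring
  rw [joukowskiPullback_eq a hv0, hre, norm_mul, norm_pow, hv, one_pow, one_mul]
  exact hM v.re (abs_le.mp (hv ▸ abs_re_le_norm v))

lemma norm_sum_mul_pow_le_of_norm_le_on_Icc {N : ℕ} (a : Fin (N + 1) → ℂ) {M : ℝ}
    (hM : ∀ x ∈ Set.Icc (-1 : ℝ) 1, ‖∑ k, a k * (x : ℂ) ^ (k : ℕ)‖ ≤ M)
    {z : ℂ} (hz : ‖z‖ ≤ 1) : ‖∑ k, a k * z ^ (k : ℕ)‖ ≤ (1 + √2) ^ N * M := by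
  obtain ⟨v, hv_lower, hv_le, rfl⟩ := exists_joukowski_preimage hz
  have hv_pos : 0 < ‖v‖ := lt_of_lt_of_le (by positivity) hv_lower
  have hpull : ‖v‖ ^ N * ‖∑ k, a k * ((v + v⁻¹) / 2) ^ (k : ℕ)‖ ≤ M := by
    rw [← norm_pow, ← norm_mul, ← joukowskiPullback_eq a (norm_pos_iff.mp hv_pos)]
    exact norm_joukowskiPullback_le a hM hv_le
  have hinv : ‖v‖⁻¹ ≤ 1 + √2 := inv_le_of_inv_le₀ (by positivity) hv_lower
  calc ‖∑ k, a k * ((v + v⁻¹) / 2) ^ (k : ℕ)‖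
      = ‖v‖⁻¹ ^ N * (‖v‖ ^ N * ‖∑ k, a k * ((v + v⁻¹) / 2) ^ (k : ℕ)‖) := by
        rw [← mul_assoc, ← mul_pow, inv_mul_cancel₀ hv_pos.ne', one_pow, one_mul]
    _ ≤ (1 + √2) ^ N * M := by gcongr

/-- The Euclidean norm of the coefficient vector of a polynomial of degree at
most `N` is at most `(1 + √2)^N` times its sup norm on the interval `[-1, 1]`. -/
theorem stmt_6 (N : ℕ) (a : EuclideanSpace ℂ (Fin (N + 1))) :
    ‖a‖ ≤ (1 + Real.sqrt 2) ^ N *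
      sSup ((fun x : ℝ => ‖∑ k, a k * (x : ℂ) ^ (k : ℕ)‖) '' Set.Icc (-1) 1) := by
  have hbdd : BddAbove ((fun x : ℝ => ‖∑ k, a k * (x : ℂ) ^ (k : ℕ)‖) '' Set.Icc (-1) 1) :=
    (isCompact_Icc.image (by fun_prop)).bddAbove
  refine norm_le_of_forall_norm_sum_mul_pow_le a fun z hz => ?_
  exact norm_sum_mul_pow_le_of_norm_le_on_Icc (a ·)
    (fun x hx => le_csSup hbdd ⟨x, hx, rfl⟩) hz.le
end

section
/- Let P be a complex polynomial of degree at most N, and let ρ ≥ 1 be a real number. Then for every w ∈ ℂ with 1 ≤ |w| ≤ ρ, |P((w + w⁻¹)/2)| ≤ ρ^N · sup_{x ∈ [−1,1]} |P(x)|. -/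
/-!
For `u ≠ 0`, `Q(u) = u ^ N * P((u + u⁻¹) / 2)` is a polynomial in `u`. On the unit circle
`(u + u⁻¹) / 2 = Re u ∈ [-1, 1]`, so `‖Q‖` is bounded there by the sup norm `M` of `P` on
`[-1, 1]`, hence on the closed unit disc by the maximum modulus principle. Evaluating at
`u = w⁻¹` gives `‖P((w + w⁻¹) / 2)‖ ≤ ‖w‖ ^ N * M`.
-/

open Polynomial Complex Metric Set

namespace Polynomial

variable {K : Type*} [Field K]

noncomputable def joukowskiPullback (N : ℕ) (P : K[X]) : K[X] :=
  MvPolynomial.aeval ![C 2⁻¹ * (X ^ 2 + 1), X] (P.homogenize N)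

theorem eval_joukowskiPullback {N : ℕ} {P : K[X]} (hP : P.natDegree ≤ N) {u : K} (hu : u ≠ 0) :
    (joukowskiPullback N P).eval u = u ^ N * P.eval ((u + u⁻¹) / 2) := by
  have hJ : 2⁻¹ * (u ^ 2 + 1) / u = (u + u⁻¹) / 2 := by field_simp
  rw [joukowskiPullback, ← coe_aeval_eq_eval, ← AlgHom.comp_apply, MvPolynomial.comp_aeval,
    MvPolynomial.aeval_eq_eval, eval_homogenize hP _ (by simpa using hu)]
  simp [hJ, mul_comm]

end Polynomial

namespace Complex

theorem norm_le_of_forall_mem_sphere_norm_le {E F : Type*} [NormedAddCommGroup E]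
    [NormedSpace ℂ E] [Nontrivial E] [NormedAddCommGroup F] [NormedSpace ℂ F]
    {f : E → F} {c : E} {r : ℝ} (hr : r ≠ 0) (hd : DiffContOnCl ℂ f (ball c r)) {C : ℝ}
    (hC : ∀ z ∈ sphere c r, ‖f z‖ ≤ C) {z : E} (hz : z ∈ closedBall c r) : ‖f z‖ ≤ C := by
  rw [← frontier_ball c hr] at hC
  rw [← closure_ball c hr] at hz
  exact norm_le_of_forall_mem_frontier_norm_le isBounded_ball hd hC hz

theorem joukowski_eq_re {u : ℂ} (hu : ‖u‖ = 1) : (u + u⁻¹) / 2 = u.re := by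
  rw [inv_eq_conj hu, add_conj]
  push_cast
  ring

end Complex

namespace Polynomial

theorem norm_eval_joukowski_le {N : ℕ} {P : ℂ[X]} (hP : P.natDegree ≤ N) {M : ℝ}
    (hM : ∀ x ∈ Icc (-1 : ℝ) 1, ‖P.eval (x : ℂ)‖ ≤ M) {w : ℂ} (hw : 1 ≤ ‖w‖) :
    ‖P.eval ((w + w⁻¹) / 2)‖ ≤ ‖w‖ ^ N * M := by
  have hw0 : w ≠ 0 := norm_pos_iff.mp (one_pos.trans_le hw)
  have hcircle : ∀ u ∈ sphere (0 : ℂ) 1, ‖(joukowskiPullback N P).eval u‖ ≤ M := by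
    intro u hu
    rw [mem_sphere_zero_iff_norm] at hu
    rw [eval_joukowskiPullback hP (norm_ne_zero_iff.mp (hu ▸ one_ne_zero)), norm_mul, norm_pow, hu,
      one_pow, one_mul, joukowski_eq_re hu]
    exact hM u.re (abs_le.mp ((abs_re_le_norm u).trans hu.le))
  have hdisk := norm_le_of_forall_mem_sphere_norm_le one_ne_zero
    (joukowskiPullback N P).differentiable.diffContOnCl hcircle (z := w⁻¹)
    (by simpa using inv_le_one_of_one_le₀ hw)
  rwa [eval_joukowskiPullback hP (inv_ne_zero hw0), inv_inv, add_comm, norm_mul, norm_pow,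
    norm_inv, inv_pow, inv_mul_le_iff₀ (by positivity)] at hdisk

end Polynomial

theorem stmt_7_general (N : ℕ) (P : Polynomial ℂ) (hP : P.natDegree ≤ N) (ρ : ℝ)
    (w : ℂ) (h1 : 1 ≤ ‖w‖) (h2 : ‖w‖ ≤ ρ) :
    ‖P.eval ((w + w⁻¹) / 2)‖ ≤
      ρ ^ N * sSup ((fun x : ℝ => ‖P.eval (x : ℂ)‖) '' Set.Icc (-1) 1) := by
  set M := sSup ((fun x : ℝ => ‖P.eval (x : ℂ)‖) '' Set.Icc (-1) 1)
  have hM : ∀ x ∈ Icc (-1 : ℝ) 1, ‖P.eval (x : ℂ)‖ ≤ M := fun x hx =>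
    le_csSup (isCompact_Icc.image (by fun_prop)).bddAbove (mem_image_of_mem _ hx)
  have hM0 : 0 ≤ M := (norm_nonneg _).trans (hM 0 (by norm_num))
  calc ‖P.eval ((w + w⁻¹) / 2)‖ ≤ ‖w‖ ^ N * M := norm_eval_joukowski_le hP hM h1
    _ ≤ ρ ^ N * M := by gcongr

/-- Bernstein's inequality: a polynomial of degree at most `N` grows at most
like `ρ^N` times its sup norm on `[-1,1]` on the closed Bernstein-ellipse region `E_ρ`
(the image of `{1 ≤ |w| ≤ ρ}` under the Joukowski map). -/
theorem stmt_7 (N : ℕ) (P : Polynomial ℂ) (hP : P.natDegree ≤ N) (ρ : ℝ) (hρ : 1 ≤ ρ)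
    (w : ℂ) (h1 : 1 ≤ ‖w‖) (h2 : ‖w‖ ≤ ρ) :
    ‖P.eval ((w + w⁻¹) / 2)‖ ≤
      ρ ^ N * sSup ((fun x : ℝ => ‖P.eval (x : ℂ)‖) '' Set.Icc (-1) 1) :=
  stmt_7_general N P hP ρ w h1 h2
end

section
/- Let Γ ⊆ ℂ be a nonempty set, let F : ℂ → ℂ, and let N be a positive integer. Let ρ > 1, ρ_* > 1, C ≥ 0 and Λ ≥ 0 be constants, and let z₀, …, z_N ∈ Γ be distinct points such that: (i) for every n ≤ N and every complex polynomial Q(z) = Σ_{k=0}^n b_k z^k of degree at most n, (Σ_{k=0}^n |b_k|²)^{1/2} ≤ ρ_*^n · sup_{z∈Γ} |Q(z)|; (ii) there exist polynomials Q₀, Q₁, …, Q_N with deg Q_n ≤ n and sup_{z∈Γ} |F(z) − Q_n(z)| ≤ C·ρ^{−n} for all 0 ≤ n ≤ N; (iii) for every complex polynomial Q of degree at most N, sup_{z∈Γ} |Q(z)| ≤ Λ · max_{0≤j≤N} |Q(z_j)|. Let P_N(z) = Σ_{k=0}^N a_k z^k be the degree-N interpolating polynomial of F at z₀, …, z_N.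 Then ‖a‖₂ ≤ sup_{z∈Γ} |F(z)| + C·( Λ·(ρ_*/ρ)^N + 2·ρ_*·Σ_{j=0}^{N−1} (ρ_*/ρ)^j + 1 ). -/
/-!
Write the interpolant as the telescoping sum
`P_N = (P_N - Q_N) + Σ_{n<N} (Q_{n+1} - Q_n) + Q_0` and bound the coefficient vector of each piece
by `ρ_*^{deg}` times its sup norm on `Γ`. The differences `Q_{n+1} - Q_n` are at most `2Cρ^{-n}`
on `Γ`; `P_N - Q_N` is at most `Cρ^{-N}` at the nodes, hence at most `ΛCρ^{-N}` on `Γ`; and `Q_0`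
is a constant within `C` of `F`, so at most `sup_Γ |F| + C`.
-/

open Polynomial Finset

variable {𝕜 : Type*} [RCLike 𝕜]

noncomputable def coeffVec (N : ℕ) : 𝕜[X] →ₗ[𝕜] EuclideanSpace 𝕜 (Fin (N + 1)) :=
  (WithLp.linearEquiv 2 𝕜 (Fin (N + 1) → 𝕜)).symm.toLinearMap ∘ₗ
    LinearMap.pi fun k => lcoeff 𝕜 k

@[simp]
theorem coeffVec_apply (N : ℕ) (R : 𝕜[X]) (k : Fin (N + 1)) : coeffVec N R k = R.coeff k :=
  rfl

theorem norm_coeffVec_of_natDegree_le {N n : ℕ} {R : 𝕜[X]} (hn : n ≤ N) (hR : R.natDegree ≤ n) :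
    ‖coeffVec N R‖ = √(∑ k ∈ range (n + 1), ‖R.coeff k‖ ^ 2) := by
  rw [EuclideanSpace.norm_eq]
  congr 1
  simp only [coeffVec_apply]
  rw [Fin.sum_univ_eq_sum_range (fun k => ‖R.coeff k‖ ^ 2)]
  refine (sum_subset (range_subset_range.mpr (by omega)) fun k _ hk => ?_).symm
  rw [coeff_eq_zero_of_natDegree_lt (hR.trans_lt (by simpa using hk)), norm_zero,
    zero_pow two_ne_zero]

theorem norm_coeffVec_le {Γ : Set 𝕜} {N n : ℕ} {ρs b : ℝ} {R : 𝕜[X]} (hρs : 0 ≤ ρs)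
    (hΓ : Γ.Nonempty) (hn : n ≤ N) (hR : R.natDegree ≤ n)
    (hcoeff : √(∑ k ∈ range (n + 1), ‖R.coeff k‖ ^ 2) ≤
      ρs ^ n * sSup ((fun w => ‖R.eval w‖) '' Γ))
    (hb : ∀ w ∈ Γ, ‖R.eval w‖ ≤ b) :
    ‖coeffVec N R‖ ≤ ρs ^ n * b := by
  rw [norm_coeffVec_of_natDegree_le hn hR]
  exact hcoeff.trans <| mul_le_mul_of_nonneg_left
    (csSup_le (hΓ.image _) (Set.forall_mem_image.2 hb)) (pow_nonneg hρs n)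

noncomputable def polyOfCoeffs {N : ℕ} (a : EuclideanSpace 𝕜 (Fin (N + 1))) : 𝕜[X] :=
  ∑ k, C (a k) * X ^ (k : ℕ)

theorem natDegree_polyOfCoeffs_le {N : ℕ} (a : EuclideanSpace 𝕜 (Fin (N + 1))) :
    (polyOfCoeffs a).natDegree ≤ N :=
  natDegree_sum_le_of_forall_le _ _ fun k _ =>
    (natDegree_C_mul_X_pow_le _ _).trans (Nat.lt_succ_iff.mp k.isLt)

theorem eval_polyOfCoeffs {N : ℕ} (a : EuclideanSpace 𝕜 (Fin (N + 1))) (x : 𝕜) :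
    (polyOfCoeffs a).eval x = ∑ k, a k * x ^ (k : ℕ) := by
  simp [polyOfCoeffs, eval_finsetSum]

theorem coeffVec_polyOfCoeffs {N : ℕ} (a : EuclideanSpace 𝕜 (Fin (N + 1))) :
    coeffVec N (polyOfCoeffs a) = a := by
  ext k
  rw [coeffVec_apply, polyOfCoeffs, finsetSum_coeff, sum_eq_single k]
  · simp
  · intro j _ hj
    rw [coeff_C_mul, coeff_X_pow, if_neg (Fin.val_injective.ne hj).symm, mul_zero]
  · simp

theorem bddAbove_norm_image_of_norm_sub_const_le {α E : Type*} [SeminormedAddCommGroup E]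
    {Γ : Set α} {F : α → E} {c : E} {C : ℝ} (h : ∀ w ∈ Γ, ‖F w - c‖ ≤ C) :
    BddAbove ((fun w => ‖F w‖) '' Γ) :=
  ⟨C + ‖c‖, Set.forall_mem_image.2 fun w hw =>
    (norm_le_norm_sub_add (F w) c).trans (by linarith [h w hw])⟩

theorem norm_eval_le_sSup_add_of_natDegree_eq_zero {Γ : Set 𝕜} {F : 𝕜 → 𝕜} {R : 𝕜[X]} {C : ℝ}
    (hR : R.natDegree = 0) (hF : ∀ w ∈ Γ, ‖F w - R.eval w‖ ≤ C) {w : 𝕜} (hw : w ∈ Γ) :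
    ‖R.eval w‖ ≤ sSup ((fun w => ‖F w‖) '' Γ) + C := by
  have heval (x : 𝕜) : R.eval x = R.coeff 0 := by
    conv_lhs => rw [eq_C_of_natDegree_eq_zero hR, eval_C]
  have hbdd := bddAbove_norm_image_of_norm_sub_const_le fun x hx => heval x ▸ hF x hx
  calc ‖R.eval w‖ ≤ ‖F w‖ + ‖F w - R.eval w‖ := norm_le_norm_add_norm_sub _ _
    _ ≤ sSup ((fun w => ‖F w‖) '' Γ) + C := add_le_add (le_csSup hbdd ⟨w, hw, rfl⟩) (hF w hw)

theorem norm_eval_succ_sub_le {F : 𝕜 → 𝕜} {Q : ℕ → 𝕜[X]} {C ρ : ℝ} {w : 𝕜} {n : ℕ}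
    (hC : 0 ≤ C) (hρ : 1 ≤ ρ)
    (hn : ‖F w - (Q n).eval w‖ ≤ C * (ρ ^ n)⁻¹)
    (hn₁ : ‖F w - (Q (n + 1)).eval w‖ ≤ C * (ρ ^ (n + 1))⁻¹) :
    ‖(Q (n + 1) - Q n).eval w‖ ≤ 2 * C * (ρ ^ n)⁻¹ := by
  have hmono : C * (ρ ^ (n + 1))⁻¹ ≤ C * (ρ ^ n)⁻¹ :=
    mul_le_mul_of_nonneg_left
      (inv_anti₀ (pow_pos (by linarith) n) (pow_le_pow_right₀ hρ n.le_succ)) hC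
  calc ‖(Q (n + 1) - Q n).eval w‖
      = ‖(F w - (Q n).eval w) - (F w - (Q (n + 1)).eval w)‖ := by
        rw [eval_sub]; congr 1; ring
    _ ≤ ‖F w - (Q n).eval w‖ + ‖F w - (Q (n + 1)).eval w‖ := norm_sub_le _ _
    _ ≤ 2 * C * (ρ ^ n)⁻¹ := by linarith

theorem sub_add_sum_range_sub_add {G : Type*} [AddCommGroup G] (P : G) (Q : ℕ → G) (N : ℕ) :
    (P - Q N) + ∑ n ∈ range N, (Q (n + 1) - Q n) + Q 0 = P := by
  rw [sum_range_sub]; abel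

open Finset in
theorem stmt_9_general (N : ℕ) (Γ : Set ℂ) (F : ℂ → ℂ)
    (ρ ρs C Λ : ℝ) (hρ : 1 < ρ) (hρs : 1 < ρs) (hC : 0 ≤ C) (hΛ : 0 ≤ Λ)
    (z : Fin (N + 1) → ℂ) (hz : ∀ j, z j ∈ Γ)
    (hcoeff : ∀ n ≤ N, ∀ Q : Polynomial ℂ, Q.natDegree ≤ n →
      Real.sqrt (∑ k ∈ Finset.range (n + 1), ‖Q.coeff k‖ ^ 2) ≤
        ρs ^ n * sSup ((fun w => ‖Q.eval w‖) '' Γ))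
    (Q : ℕ → Polynomial ℂ)
    (hQdeg : ∀ n ≤ N, (Q n).natDegree ≤ n)
    (hQerr : ∀ n ≤ N, ∀ w ∈ Γ, ‖F w - (Q n).eval w‖ ≤ C * (ρ ^ n)⁻¹)
    (hLeb : ∀ Q : Polynomial ℂ, Q.natDegree ≤ N → ∀ w ∈ Γ,
      ‖Q.eval w‖ ≤ Λ * (univ.sup' univ_nonempty fun j => ‖Q.eval (z j)‖))
    (a : EuclideanSpace ℂ (Fin (N + 1)))
    (hinterp : ∀ j, ∑ k, a k * z j ^ (k : ℕ) = F (z j)) :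
    ‖a‖ ≤ sSup ((fun w => ‖F w‖) '' Γ) +
      C * (Λ * (ρs / ρ) ^ N + 2 * ρs * ∑ j ∈ Finset.range N, (ρs / ρ) ^ j + 1) := by
  have hΓ : Γ.Nonempty := ⟨z 0, hz 0⟩
  have hρs0 : 0 ≤ ρs := by linarith
  have hcoeffVec {n : ℕ} {R : Polynomial ℂ} (hn : n ≤ N) (hR : R.natDegree ≤ n) {b : ℝ}
      (hb : ∀ w ∈ Γ, ‖R.eval w‖ ≤ b) : ‖coeffVec N R‖ ≤ ρs ^ n * b :=
    norm_coeffVec_le hρs0 hΓ hn hR (hcoeff n hn R hR) hb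
  set M := sSup ((fun w => ‖F w‖) '' Γ)
  have hQ0 : ‖coeffVec N (Q 0)‖ ≤ M + C := by
    simpa using hcoeffVec N.zero_le (hQdeg 0 N.zero_le) fun w hw =>
      norm_eval_le_sSup_add_of_natDegree_eq_zero (Nat.le_zero.mp (hQdeg 0 N.zero_le))
        (by simpa using hQerr 0 N.zero_le) hw
  have hdiff (n : ℕ) (hn : n ∈ range N) :
      ‖coeffVec N (Q (n + 1) - Q n)‖ ≤ 2 * C * ρs * (ρs / ρ) ^ n := by
    rw [mem_range] at hn
    have hdeg : (Q (n + 1) - Q n).natDegree ≤ n + 1 :=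
      (natDegree_sub_le _ _).trans (max_le (hQdeg _ hn) ((hQdeg n hn.le).trans n.le_succ))
    refine (hcoeffVec hn hdeg fun w hw => norm_eval_succ_sub_le hC hρ.le
      (hQerr n hn.le w hw) (hQerr (n + 1) hn w hw)).trans_eq ?_
    rw [div_pow, pow_succ]
    field_simp
  have hPQ : ‖coeffVec N (polyOfCoeffs a - Q N)‖ ≤ C * Λ * (ρs / ρ) ^ N := by
    have hdeg : (polyOfCoeffs a - Q N).natDegree ≤ N :=
      (natDegree_sub_le _ _).trans (max_le (natDegree_polyOfCoeffs_le a) (hQdeg N le_rfl))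
    refine (hcoeffVec le_rfl hdeg (b := Λ * (C * (ρ ^ N)⁻¹)) fun w hw =>
      (hLeb _ hdeg w hw).trans <|
        mul_le_mul_of_nonneg_left (sup'_le _ _ fun j _ => ?_) hΛ).trans_eq ?_
    · rw [eval_sub, eval_polyOfCoeffs, hinterp]
      exact hQerr N le_rfl (z j) (hz j)
    · rw [div_pow]
      field_simp
  calc ‖a‖ = ‖coeffVec N (polyOfCoeffs a - Q N) + ∑ n ∈ range N, coeffVec N (Q (n + 1) - Q n)
        + coeffVec N (Q 0)‖ := by
        rw [← map_sum, ← map_add, ← map_add, sub_add_sum_range_sub_add, coeffVec_polyOfCoeffs]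
    _ ≤ ‖coeffVec N (polyOfCoeffs a - Q N)‖ + ∑ n ∈ range N, ‖coeffVec N (Q (n + 1) - Q n)‖
        + ‖coeffVec N (Q 0)‖ := norm_add₃_le.trans (by gcongr; exact norm_sum_le _ _)
    _ ≤ C * Λ * (ρs / ρ) ^ N + ∑ n ∈ range N, 2 * C * ρs * (ρs / ρ) ^ n + (M + C) := by
        gcongr with n hn
        exact hdiff n hn
    _ = _ := by rw [← mul_sum]; ring

open Finset in
/-- Bound for the Euclidean norm of the monomial coefficient vector of the
interpolating polynomial `P_N` of `F`, given a coefficient-norm bound with parameter `ρ_*`,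
near-best polynomial approximations `Q_n` with error `C ρ^{-n}`, and Lebesgue constant `Λ`. -/
theorem stmt_9 (N : ℕ) (hN : 0 < N) (Γ : Set ℂ) (hΓ : Γ.Nonempty) (F : ℂ → ℂ)
    (ρ ρs C Λ : ℝ) (hρ : 1 < ρ) (hρs : 1 < ρs) (hC : 0 ≤ C) (hΛ : 0 ≤ Λ)
    (z : Fin (N + 1) → ℂ) (hz : ∀ j, z j ∈ Γ) (hzinj : Function.Injective z)
    (hcoeff : ∀ n ≤ N, ∀ Q : Polynomial ℂ, Q.natDegree ≤ n →
      Real.sqrt (∑ k ∈ Finset.range (n + 1), ‖Q.coeff k‖ ^ 2) ≤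
        ρs ^ n * sSup ((fun w => ‖Q.eval w‖) '' Γ))
    (Q : ℕ → Polynomial ℂ)
    (hQdeg : ∀ n ≤ N, (Q n).natDegree ≤ n)
    (hQerr : ∀ n ≤ N, ∀ w ∈ Γ, ‖F w - (Q n).eval w‖ ≤ C * (ρ ^ n)⁻¹)
    (hLeb : ∀ Q : Polynomial ℂ, Q.natDegree ≤ N → ∀ w ∈ Γ,
      ‖Q.eval w‖ ≤ Λ * (univ.sup' univ_nonempty fun j => ‖Q.eval (z j)‖))
    (a : EuclideanSpace ℂ (Fin (N + 1)))
    (hinterp : ∀ j, ∑ k, a k * z j ^ (k : ℕ) = F (z j)) :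
    ‖a‖ ≤ sSup ((fun w => ‖F w‖) '' Γ) +
      C * (Λ * (ρs / ρ) ^ N + 2 * ρs * ∑ j ∈ Finset.range N, (ρs / ρ) ^ j + 1) :=
  stmt_9_general N Γ F ρ ρs C Λ hρ hρs hC hΛ z hz hcoeff Q hQdeg hQerr hLeb a hinterp
end
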